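/- Let T be a non-degenerate rooted phylogenetic X-tree, σ a total order on X, and f the cluster marker map for T and σ. Then the graph Γ(L_{(T,f)}) is a connected block graph, every block of Γ(L_{(T,f)}) is of the form Γ(L_{(T,f)}(v)) for some interior vertex v, and Γ(L_{(T,f)}) is claw-free; i.e., L_{(T,f)} is a distinguished minimal topological lasso for T. -/

import Mathlib

open scoped Classical

/-- A rooted `X`-tree on vertex type `V`: a finite rooted tree encoded by a parent
function, whose leaves (the vertices with no children) are bijectively labelled by `X`. -/
structure XTree (X V : Type) where
  root : V
  parent : V → V
  parent_root : parent root = root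
  reaches : ∀ v : V, ∃ n : ℕ, parent^[n] v = root
  leaf : X → V
  leaf_inj : Function.Injective leaf
  leaf_iff : ∀ v : V, (∀ w : V, parent w = v → w = v) ↔ v ∈ Set.range leaf

namespace XTree

variable {X V : Type}

/-- The children of a vertex. -/
def children (T : XTree X V) (v : V) : Set V := {w | T.parent w = v ∧ w ≠ v}

def IsLeaf (T : XTree X V) (v : V) : Prop := v ∈ Set.range T.leaf

def Interior (T : XTree X V) (v : V) : Prop := ¬ T.IsLeaf v

/-- Phylogenetic: root has at least two children, and no non-root vertex has exactly
one child (no degree-two vertices apart from possibly the root). -/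
def IsPhylo (T : XTree X V) : Prop :=
  2 ≤ (T.children T.root).ncard ∧
    ∀ v : V, v ≠ T.root → T.Interior v → 2 ≤ (T.children v).ncard

/-- `T.Desc v w` : `w` is a descendant of `v` (or equal to `v`). -/
def Desc (T : XTree X V) (v w : V) : Prop := ∃ n : ℕ, T.parent^[n] w = v

/-- The set of leaf labels below a vertex. -/
def leafSet (T : XTree X V) (v : V) : Set X := {x | T.Desc v (T.leaf x)}

/-- `v` is the last common ancestor of the set `S` of vertices. -/
def IsLCA (T : XTree X V) (v : V) (S : Set V) : Prop :=
  (∀ w ∈ S, T.Desc v w) ∧ ∀ u : V, (∀ w ∈ S, T.Desc u w) → T.Desc u v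

/-- Not a star tree: some interior vertex other than the root. -/
def NonDegenerate (T : XTree X V) : Prop := ∃ v : V, T.Interior v ∧ v ≠ T.root

end XTree

/-- A cord: a 2-element subset of `X`. -/
def IsCord {X : Type} (c : Set X) : Prop := ∃ a b : X, a ≠ b ∧ c = {a, b}

/-- The graph `Γ(L)` with vertex set `X` and edge set `L`. -/
def cordGraph {X : Type} (L : Set (Set X)) : SimpleGraph X where
  Adj a b := a ≠ b ∧ ({a, b} : Set X) ∈ L
  symm := by
    constructor
    intro a b h
    exact ⟨Ne.symm h.1, by rw [Set.pair_comm]; exact h.2⟩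
  loopless := by constructor; intro a h; exact h.1 rfl

/-- Topological lasso, via the child-edge graph characterization: for every interior
vertex, any two distinct child subtrees are joined by a cord of `L`. -/
def XTree.IsTopoLasso {X V : Type} (T : XTree X V) (L : Set (Set X)) : Prop :=
  ∀ v c₁ c₂ : V, c₁ ∈ T.children v → c₂ ∈ T.children v → c₁ ≠ c₂ →
    ∃ a b : X, a ∈ T.leafSet c₁ ∧ b ∈ T.leafSet c₂ ∧ ({a, b} : Set X) ∈ L

/-- Set-inclusion minimal topological lasso. -/
def XTree.IsMinTopoLasso {X V : Type} (T : XTree X V) (L : Set (Set X)) : Prop :=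
  T.IsTopoLasso L ∧ ∀ L' ⊆ L, T.IsTopoLasso L' → L' = L

/-- A nonempty vertex set inducing a connected subgraph with no cut vertex. -/
def GoodSet {α : Type} (G : SimpleGraph α) (B : Set α) : Prop :=
  B.Nonempty ∧ (G.induce B).Connected ∧
    ∀ v ∈ B, (B \ {v}).Nonempty → (G.induce (B \ {v})).Connected

/-- A block: a maximal connected induced subgraph without a cut vertex. -/
def IsBlock {α : Type} (G : SimpleGraph α) (B : Set α) : Prop :=
  GoodSet G B ∧ ∀ C : Set α, GoodSet G C → B ⊆ C → B = C

/-- A block graph: every block is a clique. -/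
def IsBlockGraph {α : Type} (G : SimpleGraph α) : Prop :=
  ∀ B : Set α, IsBlock G B → G.IsClique B

/-- A cut vertex: deleting it disconnects the graph. -/
def IsCutVtx {α : Type} (G : SimpleGraph α) (v : α) : Prop :=
  ¬ (G.induce {w | w ≠ v}).Connected

/-- Claw-free: no induced `K_{1,3}`. -/
def ClawFree {α : Type} (G : SimpleGraph α) : Prop :=
  ¬ ∃ v a b c : α, a ≠ b ∧ a ≠ c ∧ b ≠ c ∧
    G.Adj v a ∧ G.Adj v b ∧ G.Adj v c ∧ ¬ G.Adj a b ∧ ¬ G.Adj a c ∧ ¬ G.Adj b c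

/-- The child-edge graph `G(L,v)`: vertices are the children of `v` (equivalently
the child edges of `v`), two of them adjacent if a cord of `L` joins their subtrees. -/
def childGraph {X V : Type} (T : XTree X V) (L : Set (Set X)) (v : V) :
    SimpleGraph {c : V // c ∈ T.children v} where
  Adj c₁ c₂ := c₁ ≠ c₂ ∧ ∃ a b : X,
    a ∈ T.leafSet (c₁ : V) ∧ b ∈ T.leafSet (c₂ : V) ∧ ({a, b} : Set X) ∈ L
  symm := by
    constructor
    rintro c₁ c₂ ⟨h, a, b, ha, hb, hm⟩
    exact ⟨Ne.symm h, b, a, hb, ha, by rw [Set.pair_comm]; exact hm⟩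
  loopless := by constructor; rintro c ⟨h, -⟩; exact h rfl

/-- `cl(T)`: the clusters of non-root interior vertices. -/
def clSet {X V : Type} (T : XTree X V) : Set (Set X) :=
  {A | ∃ v : V, v ≠ T.root ∧ T.Interior v ∧ A = T.leafSet v}

/-- A cluster marker map for `T` and the ordering of `X`:
`f A` is the `σ`-least element of `A` not used as marker of a proper subcluster. -/
def IsClusterMarker {X V : Type} [LinearOrder X] (T : XTree X V) (f : Set X → X) : Prop :=
  ∀ A ∈ clSet T,
    ((∃ B ∈ clSet T, B ⊂ A) →
      IsLeast (A \ {y | ∃ B ∈ clSet T, B ⊂ A ∧ f B = y}) (f A)) ∧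
    ((¬ ∃ B ∈ clSet T, B ⊂ A) → IsLeast A (f A))

/-- The marker of a child `c` of an interior vertex: the label of `c` if `c` is a leaf,
and `f (L(c))` if `c` is interior. -/
def markRel {X V : Type} (T : XTree X V) (f : Set X → X) (c : V) (a : X) : Prop :=
  T.leaf a = c ∨ (T.Interior c ∧ a = f (T.leafSet c))

/-- `L_{(T,f)}(v)`: all cords between markers of distinct children of `v`. -/
def lassoAt {X V : Type} (T : XTree X V) (f : Set X → X) (v : V) : Set (Set X) :=
  {c | ∃ c₁ c₂ : V, c₁ ∈ T.children v ∧ c₂ ∈ T.children v ∧ c₁ ≠ c₂ ∧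
    ∃ a b : X, markRel T f c₁ a ∧ markRel T f c₂ b ∧ c = {a, b}}

/-- `L_{(T,f)}`: the union over all interior vertices of `L_{(T,f)}(v)`. -/
def lassoFull {X V : Type} (T : XTree X V) (f : Set X → X) : Set (Set X) :=
  {c | ∃ v : V, T.Interior v ∧ c ∈ lassoAt T f v}

/-- An equidistant proper edge-weighting of `T`, encoded by the height function
`t v` = distance from `v` to any leaf below it (so all leaves are equidistant
from the root); properness: interior edges have positive weight. -/
def EquidistantProper {X V : Type} (T : XTree X V) (t : V → ℝ) : Prop :=
  (∀ x : X, t (T.leaf x) = 0) ∧ (∀ v : V, t v ≤ t (T.parent v)) ∧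
    ∀ v : V, v ≠ T.root → T.Interior v → t v < t (T.parent v)

/-- Equivalence of two `X`-trees: a root-, parent- and labelling-preserving bijection. -/
def TreeEquiv {X V V' : Type} (T : XTree X V) (T' : XTree X V') : Prop :=
  ∃ φ : V ≃ V', φ T.root = T'.root ∧ (∀ v, φ (T.parent v) = T'.parent (φ v)) ∧
    ∀ x, φ (T.leaf x) = T'.leaf x

/-- `S` is (equivalent to) the restriction `T|_Y`: the clusters of `S` are exactly the
nonempty traces on `Y` of the clusters of `T`. -/
def IsRestriction {X : Type} (Y : Set X) {V W : Type}
    (T : XTree X V) (S : XTree (↥Y) W) : Prop :=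
  ∀ A : Set X, A ⊆ Y →
    ((∃ w : W, A = Subtype.val '' S.leafSet w) ↔ (A.Nonempty ∧ ∃ v : V, A = T.leafSet v ∩ Y))

/-- The restriction `L|_Y` of a set of cords of `X` to cords of `Y`. -/
def restrictLasso {X : Type} (Y : Set X) (L : Set (Set X)) : Set (Set ↥Y) :=
  {c | ∃ a b : ↥Y, a ≠ b ∧ c = {a, b} ∧ ({(a : X), (b : X)} : Set X) ∈ L}

/-!
Write `M(v)` (`markerSet T f v`) for the markers of the children of an interior vertex `v`, so
that `Γ(L_{(T,f)})` is the union of the cliques `M(v)`. A label `x` lies only in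
`M(parent of the leaf x)` and, if `x = f(L(c))`, in `M(parent of c)`; hence it lies in at most
two cliques (claw-freeness) and two cliques share at most one vertex. The graph on interior
vertices joining `v` and `w` when `M(v)` and `M(w)` meet therefore has one edge for each
non-root interior vertex `c`, so it is a tree. Every shared marker is then a cut vertex
separating its two cliques, and the blocks of `Γ(L_{(T,f)})` are exactly the `M(v)`.
Minimality holds because the only cord of `L_{(T,f)}` joining the subtrees of two children of
`v` is the one between their markers.
-/

namespace XTree

variable {X V : Type} (T : XTree X V)

lemma parent_iterate_root (n : ℕ) : T.parent^[n] T.root = T.root :=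
  Function.iterate_fixed T.parent_root n

lemma eq_root_of_iterate_eq {v : V} {k : ℕ} (hk : 0 < k) (h : T.parent^[k] v = v) :
    v = T.root := by
  obtain ⟨n, hn⟩ := T.reaches v
  have hper : Function.IsPeriodicPt T.parent (k * n) v :=
    Function.IsPeriodicPt.mul_const h n
  calc v = T.parent^[k * n - n + n] v := by
        rw [Nat.sub_add_cancel (Nat.le_mul_of_pos_left n hk)]; exact hper.symm
    _ = T.root := by rw [Function.iterate_add_apply, hn, parent_iterate_root]

lemma desc_refl (v : V) : T.Desc v v := ⟨0, rfl⟩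

lemma desc_trans {u v w : V} (h₁ : T.Desc u v) (h₂ : T.Desc v w) : T.Desc u w := by
  obtain ⟨n, hn⟩ := h₁
  obtain ⟨m, hm⟩ := h₂
  exact ⟨n + m, by rw [Function.iterate_add_apply, hm, hn]⟩

lemma desc_root (v : V) : T.Desc T.root v := T.reaches v

lemma desc_antisymm {v w : V} (h₁ : T.Desc v w) (h₂ : T.Desc w v) : v = w := by
  obtain ⟨n, hn⟩ := h₁
  obtain ⟨m, hm⟩ := h₂
  rcases Nat.eq_zero_or_pos (n + m) with h0 | h0
  · rwa [show m = 0 by omega] at hm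
  · have hv : v = T.root :=
      T.eq_root_of_iterate_eq h0 (by rw [Function.iterate_add_apply, hm, hn])
    rw [hv, parent_iterate_root] at hm
    rw [hv, hm]

lemma desc_total {u w x : V} (h₁ : T.Desc u x) (h₂ : T.Desc w x) :
    T.Desc u w ∨ T.Desc w u := by
  obtain ⟨n, hn⟩ := h₁
  obtain ⟨m, hm⟩ := h₂
  rcases le_total n m with h | h
  · refine Or.inr ⟨m - n, ?_⟩
    rw [← hn, ← Function.iterate_add_apply, Nat.sub_add_cancel h, hm]
  · refine Or.inl ⟨n - m, ?_⟩
    rw [← hm, ← Function.iterate_add_apply, Nat.sub_add_cancel h, hn]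

lemma desc_parent {v w : V} (h : T.Desc v w) (hne : w ≠ v) : T.Desc v (T.parent w) := by
  obtain ⟨n, hn⟩ := h
  cases n with
  | zero => exact absurd hn hne
  | succ k => exact ⟨k, by rwa [← Function.iterate_succ_apply]⟩

lemma exists_child_desc {v w : V} (h : T.Desc v w) (hne : w ≠ v) :
    ∃ c ∈ T.children v, T.Desc c w := by
  obtain ⟨n, hn⟩ := h
  induction n with
  | zero => exact absurd hn hne
  | succ n ih =>
    by_cases hc : T.parent^[n] w = v
    · exact ih hc
    · exact ⟨T.parent^[n] w, ⟨by rwa [Function.iterate_succ_apply'] at hn, hc⟩, n, rfl⟩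

lemma desc_of_child {c v : V} (h : c ∈ T.children v) : T.Desc v c := ⟨1, h.1⟩

lemma child_ne_root {c v : V} (h : c ∈ T.children v) : c ≠ T.root := by
  rintro rfl
  exact h.2 (h.1.symm.trans T.parent_root).symm

lemma interior_of_child {c v : V} (h : c ∈ T.children v) : T.Interior v :=
  fun hleaf => h.2 ((T.leaf_iff v).2 hleaf c h.1)

lemma mem_children_parent {v : V} (hv : v ≠ T.root) : v ∈ T.children (T.parent v) :=
  ⟨rfl, fun h => hv (T.eq_root_of_iterate_eq one_pos h.symm)⟩

lemma interior_parent {v : V} (hv : v ≠ T.root) : T.Interior (T.parent v) :=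
  T.interior_of_child (T.mem_children_parent hv)

lemma ne_of_desc_child {c v w : V} (hc : c ∈ T.children w) (h : T.Desc c v) : v ≠ w := by
  rintro rfl
  exact hc.2 (T.desc_antisymm h (T.desc_of_child hc))

lemma children_eq_of_desc {c₁ c₂ v w : V} (h₁ : c₁ ∈ T.children v)
    (h₂ : c₂ ∈ T.children v) (hd₁ : T.Desc c₁ w) (hd₂ : T.Desc c₂ w) :
    c₁ = c₂ := by
  wlog h : T.Desc c₁ c₂ generalizing c₁ c₂
  · exact (this h₂ h₁ hd₂ hd₁ ((T.desc_total hd₁ hd₂).resolve_left h)).symm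
  by_contra hne
  have hv : T.Desc c₁ v := h₂.1 ▸ T.desc_parent h (Ne.symm hne)
  exact T.ne_of_desc_child h₁ hv rfl

lemma leafSet_mono {v w : V} (h : T.Desc v w) : T.leafSet w ⊆ T.leafSet v :=
  fun _ hx => T.desc_trans h hx

lemma eq_leaf_of_desc {x : X} {w : V} (h : T.Desc (T.leaf x) w) : w = T.leaf x := by
  obtain ⟨n, hn⟩ := h
  induction n generalizing w with
  | zero => exact hn
  | succ n ih => exact (T.leaf_iff _).2 ⟨x, rfl⟩ w (ih hn)

lemma leafSet_leaf (x : X) : T.leafSet (T.leaf x) = {x} :=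
  Set.eq_singleton_iff_unique_mem.2
    ⟨T.desc_refl _, fun _ hy => T.leaf_inj (T.eq_leaf_of_desc hy)⟩

lemma desc_parent_leaf {c : V} (hc : T.Interior c) {x : X} (hx : x ∈ T.leafSet c) :
    T.Desc c (T.parent (T.leaf x)) :=
  T.desc_parent hx fun h => hc ⟨x, h⟩

lemma IsLCA.unique {T : XTree X V} {u v : V} {S : Set V} (hu : T.IsLCA u S)
    (hv : T.IsLCA v S) : u = v :=
  T.desc_antisymm (hv.2 u hu.1) (hu.2 v hv.1)

lemma isLCA_of_mem_leafSet_children {v c₁ c₂ : V} (hc₁ : c₁ ∈ T.children v)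
    (hc₂ : c₂ ∈ T.children v) (hne : c₁ ≠ c₂) {x y : X} (hx : x ∈ T.leafSet c₁)
    (hy : y ∈ T.leafSet c₂) : T.IsLCA v {T.leaf x, T.leaf y} := by
  have hvx : T.Desc v (T.leaf x) := T.desc_trans (T.desc_of_child hc₁) hx
  have hvy : T.Desc v (T.leaf y) := T.desc_trans (T.desc_of_child hc₂) hy
  refine ⟨by simp [hvx, hvy], fun u hu => ?_⟩
  have hux : T.Desc u (T.leaf x) := hu _ (by simp)
  have huy : T.Desc u (T.leaf y) := hu _ (by simp)
  refine (T.desc_total hvx hux).elim (fun hvu => ?_) id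
  by_cases huv : u = v
  · exact huv ▸ T.desc_refl u
  obtain ⟨c, hc, hcu⟩ := T.exists_child_desc hvu huv
  have e₁ := T.children_eq_of_desc hc hc₁ (T.desc_trans hcu hux) hx
  have e₂ := T.children_eq_of_desc hc hc₂ (T.desc_trans hcu huy) hy
  exact absurd (e₁.symm.trans e₂) hne

lemma exists_child_of_interior {v : V} (hv : T.Interior v) : ∃ c, c ∈ T.children v := by
  simpa [Interior, IsLeaf, ← T.leaf_iff, children] using hv

lemma exists_other_child {T : XTree X V} (hph : T.IsPhylo) {v : V} (hv : T.Interior v)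
    (c : V) : ∃ c' ∈ T.children v, c' ≠ c := by
  refine Set.exists_ne_of_one_lt_ncard ?_ c
  by_cases hroot : v = T.root
  · exact hroot ▸ hph.1
  · exact hph.2 v hroot hv

lemma root_interior {T : XTree X V} (hph : T.IsPhylo) : T.Interior T.root := by
  obtain ⟨c, hc⟩ : (T.children T.root).Nonempty :=
    Set.nonempty_of_ncard_ne_zero (by have := hph.1; omega)
  exact T.interior_of_child hc

lemma leaf_ne_root {T : XTree X V} (hph : T.IsPhylo) (x : X) : T.leaf x ≠ T.root :=
  fun h => root_interior hph ⟨x, h⟩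

section Finite

variable [Finite V]

lemma ncard_desc_lt {c v : V} (hc : c ∈ T.children v) :
    {u | T.Desc c u}.ncard < {u | T.Desc v u}.ncard :=
  Set.ncard_lt_ncard ⟨fun _ hu => T.desc_trans (T.desc_of_child hc) hu,
    fun hsub => hc.2 (T.desc_antisymm (hsub (T.desc_refl v)) (T.desc_of_child hc))⟩

theorem children_induction {P : V → Prop} (h : ∀ v, (∀ c ∈ T.children v, P c) → P v)
    (v : V) : P v :=
  (measure fun v => {u | T.Desc v u}.ncard).wf.induction v
    fun v ih => h v fun c hc => ih c (T.ncard_desc_lt hc)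

lemma leafSet_nonempty (v : V) : (T.leafSet v).Nonempty := by
  induction v using T.children_induction with
  | h v ih =>
    by_cases hv : T.IsLeaf v
    · obtain ⟨x, rfl⟩ := hv
      exact ⟨x, T.desc_refl _⟩
    · obtain ⟨c, hc⟩ := T.exists_child_of_interior hv
      exact (ih c hc).mono (T.leafSet_mono (T.desc_of_child hc))

lemma leafSet_injOn {T : XTree X V} (hph : T.IsPhylo) {v w : V} (hv : T.Interior v)
    (hw : T.Interior w) (h : T.leafSet v = T.leafSet w) : v = w := by
  wlog hd : T.Desc v w generalizing v w
  · obtain ⟨x, hx⟩ := T.leafSet_nonempty v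
    have hx' : x ∈ T.leafSet w := h ▸ hx
    exact (this hw hv h.symm ((T.desc_total hx hx').resolve_left hd)).symm
  by_contra hne
  obtain ⟨c, hc, hcw⟩ := T.exists_child_desc hd (Ne.symm hne)
  obtain ⟨c', hc', hcc⟩ := exists_other_child hph hv c
  obtain ⟨y, hy⟩ := T.leafSet_nonempty c'
  have hyw : y ∈ T.leafSet w := h ▸ T.leafSet_mono (T.desc_of_child hc') hy
  exact hcc (T.children_eq_of_desc hc' hc hy (T.desc_trans hcw hyw))

end Finite

end XTree

section MarkerSets

open XTree

variable {X V : Type} {T : XTree X V} {f : Set X → X}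

lemma markRel_unique {c : V} {a b : X} (ha : markRel T f c a) (hb : markRel T f c b) :
    a = b := by
  rcases ha with ha | ⟨hic, rfl⟩ <;> rcases hb with hb | ⟨hic', rfl⟩
  · exact T.leaf_inj (ha.trans hb.symm)
  · exact absurd ⟨a, ha⟩ hic'
  · exact absurd ⟨b, hb⟩ hic
  · rfl

lemma exists_markRel (T : XTree X V) (f : Set X → X) (c : V) : ∃ a, markRel T f c a := by
  by_cases h : T.IsLeaf c
  · obtain ⟨x, hx⟩ := h
    exact ⟨x, Or.inl hx⟩
  · exact ⟨_, Or.inr ⟨h, rfl⟩⟩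

/-- The vertex set of `Γ(L_{(T,f)}(v))`. -/
def markerSet (T : XTree X V) (f : Set X → X) (v : V) : Set X :=
  {a | ∃ c ∈ T.children v, markRel T f c a}

lemma mem_markerSet_iff (hph : T.IsPhylo) {v : V} {a : X} :
    a ∈ markerSet T f v ↔ v = T.parent (T.leaf a) ∨
      ∃ c, c ≠ T.root ∧ T.Interior c ∧ f (T.leafSet c) = a ∧ v = T.parent c := by
  constructor
  · rintro ⟨c, hc, rfl | ⟨hic, rfl⟩⟩
    · exact Or.inl hc.1.symm
    · exact Or.inr ⟨c, T.child_ne_root hc, hic, rfl, hc.1.symm⟩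
  · rintro (rfl | ⟨c, hc, hic, rfl, rfl⟩)
    · exact ⟨T.leaf a, T.mem_children_parent (leaf_ne_root hph a), Or.inl rfl⟩
    · exact ⟨c, T.mem_children_parent hc, Or.inr ⟨hic, rfl⟩⟩

end MarkerSets

section ClusterMarkers

open XTree

variable {X V : Type} [LinearOrder X] {T : XTree X V} {f : Set X → X}

lemma IsClusterMarker.mem (hf : IsClusterMarker T f) {A : Set X} (hA : A ∈ clSet T) :
    f A ∈ A := by
  by_cases h : ∃ B ∈ clSet T, B ⊂ A
  · exact ((hf A hA).1 h).1.1
  · exact ((hf A hA).2 h).1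

lemma IsClusterMarker.ne_of_ssubset (hf : IsClusterMarker T f) {A B : Set X}
    (hA : A ∈ clSet T) (hB : B ∈ clSet T) (hBA : B ⊂ A) : f A ≠ f B :=
  fun h => ((hf A hA).1 ⟨B, hB, hBA⟩).1.2 ⟨B, hB, hBA, h.symm⟩

lemma IsClusterMarker.mem_leafSet (hf : IsClusterMarker T f) {c : V} (hc : c ≠ T.root)
    (hic : T.Interior c) : f (T.leafSet c) ∈ T.leafSet c :=
  hf.mem ⟨c, hc, hic, rfl⟩

lemma IsClusterMarker.eq_of_marker_eq [Finite V] (hph : T.IsPhylo) (hf : IsClusterMarker T f)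
    {c c' : V} (hc : c ≠ T.root) (hic : T.Interior c) (hc' : c' ≠ T.root)
    (hic' : T.Interior c') (h : f (T.leafSet c) = f (T.leafSet c')) : c = c' := by
  have hA : T.leafSet c ∈ clSet T := ⟨c, hc, hic, rfl⟩
  have hA' : T.leafSet c' ∈ clSet T := ⟨c', hc', hic', rfl⟩
  have hx : f (T.leafSet c) ∈ T.leafSet c := hf.mem hA
  have hx' : f (T.leafSet c) ∈ T.leafSet c' := h ▸ hf.mem hA'
  refine leafSet_injOn hph hic hic' (by_contra fun hne => ?_)
  rcases T.desc_total hx hx' with hd | hd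
  · exact hf.ne_of_ssubset hA hA' ((T.leafSet_mono hd).ssubset_of_ne (Ne.symm hne)) h
  · exact hf.ne_of_ssubset hA' hA ((T.leafSet_mono hd).ssubset_of_ne hne) h.symm

lemma IsClusterMarker.mem_leafSet_of_markRel (hf : IsClusterMarker T f) {c : V}
    (hc : c ≠ T.root) {a : X} (ha : markRel T f c a) : a ∈ T.leafSet c := by
  rcases ha with rfl | ⟨hic, rfl⟩
  · exact T.desc_refl _
  · exact hf.mem_leafSet hc hic

lemma IsClusterMarker.markRel_ne (hf : IsClusterMarker T f) {v c₁ c₂ : V}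
    (hc₁ : c₁ ∈ T.children v) (hc₂ : c₂ ∈ T.children v) (hne : c₁ ≠ c₂) {a b : X}
    (ha : markRel T f c₁ a) (hb : markRel T f c₂ b) : a ≠ b := by
  rintro rfl
  exact hne (T.children_eq_of_desc hc₁ hc₂
    (hf.mem_leafSet_of_markRel (T.child_ne_root hc₁) ha)
    (hf.mem_leafSet_of_markRel (T.child_ne_root hc₂) hb))

lemma exists_eq_of_mem_markerSet [Finite V] (hph : T.IsPhylo) (hf : IsClusterMarker T f)
    {v w : V} (hvw : v ≠ w) {a : X} (hv : a ∈ markerSet T f v)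
    (hw : a ∈ markerSet T f w) :
    ∃ c, c ≠ T.root ∧ T.Interior c ∧ f (T.leafSet c) = a ∧
      s(v, w) = s(T.parent (T.leaf a), T.parent c) := by
  rw [mem_markerSet_iff hph] at hv hw
  rcases hv with rfl | ⟨c, hc, hic, hfc, rfl⟩ <;>
    rcases hw with rfl | ⟨c', hc', hic', hfc', rfl⟩
  · exact absurd rfl hvw
  · exact ⟨c', hc', hic', hfc', rfl⟩
  · exact ⟨c, hc, hic, hfc, Sym2.eq_swap⟩
  · exact absurd (congrArg T.parent (hf.eq_of_marker_eq hph hc hic hc' hic' (hfc.trans hfc'.symm)))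
      hvw

lemma eq_of_mem_markerSet₃ [Finite V] (hph : T.IsPhylo) (hf : IsClusterMarker T f)
    {u v w : V} (huv : u ≠ v) (huw : u ≠ w) {a : X} (hu : a ∈ markerSet T f u)
    (hv : a ∈ markerSet T f v) (hw : a ∈ markerSet T f w) : v = w := by
  obtain ⟨c, hc, hic, hfc, huv'⟩ := exists_eq_of_mem_markerSet hph hf huv hu hv
  obtain ⟨c', hc', hic', hfc', huw'⟩ := exists_eq_of_mem_markerSet hph hf huw hu hw
  rw [hf.eq_of_marker_eq hph hc hic hc' hic' (hfc.trans hfc'.symm), ← huw'] at huv'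
  exact Sym2.congr_right.1 huv'

lemma eq_of_mem_markerSet_inter [Finite V] (hph : T.IsPhylo) (hf : IsClusterMarker T f)
    {v w : V} (hvw : v ≠ w) {a b : X} (hav : a ∈ markerSet T f v)
    (haw : a ∈ markerSet T f w) (hbv : b ∈ markerSet T f v) (hbw : b ∈ markerSet T f w) :
    a = b := by
  obtain ⟨c, hc, hic, rfl, hva⟩ := exists_eq_of_mem_markerSet hph hf hvw hav haw
  obtain ⟨d, hd, hid, rfl, hvb⟩ := exists_eq_of_mem_markerSet hph hf hvw hbv hbw
  have hca := T.desc_parent_leaf hic (hf.mem_leafSet hc hic)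
  have hdb := T.desc_parent_leaf hid (hf.mem_leafSet hd hid)
  rcases Sym2.eq_iff.1 (hva.symm.trans hvb) with ⟨hp, hq⟩ | ⟨hp, hq⟩
  · rw [hp] at hca
    rw [T.children_eq_of_desc (T.mem_children_parent hc)
      (hq ▸ T.mem_children_parent hd) hca hdb]
  · have h₁ : T.Desc (T.parent c) (T.parent d) :=
      T.desc_trans (T.desc_of_child (T.mem_children_parent hc)) (hp ▸ hca)
    have h₂ : T.Desc (T.parent d) (T.parent c) :=
      T.desc_trans (T.desc_of_child (T.mem_children_parent hd)) (hq ▸ hdb)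
    exact absurd (hp.trans (T.desc_antisymm h₂ h₁))
      (T.ne_of_desc_child (T.mem_children_parent hc) hca)

end ClusterMarkers

lemma SimpleGraph.IsClique.goodSet {α : Type} {G : SimpleGraph α} {S : Set α}
    (h : G.IsClique S) (hS : S.Nonempty) : GoodSet G S := by
  have induce_connected : ∀ S' ⊆ S, S'.Nonempty → (G.induce S').Connected := by
    intro S' hS' hne
    have : Nonempty S' := hne.to_subtype
    rw [SimpleGraph.induce_eq_top.2 (h.subset hS')]
    exact SimpleGraph.connected_top
  exact ⟨hS, induce_connected S le_rfl hS,
    fun _ _ hne => induce_connected _ Set.sdiff_subset hne⟩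

section CordGraph

open XTree

variable {X V : Type} {T : XTree X V} {f : Set X → X}

lemma cordGraph_lassoFull_adj_iff {a b : X} :
    (cordGraph (lassoFull T f)).Adj a b ↔
      a ≠ b ∧ ∃ v, T.Interior v ∧ a ∈ markerSet T f v ∧ b ∈ markerSet T f v := by
  constructor
  · rintro ⟨hab, v, hv, c₁, c₂, hc₁, hc₂, -, a', b', ha', hb', he⟩
    have hmem : ∀ x ∈ ({a, b} : Set X), x ∈ markerSet T f v := by
      rw [he]
      rintro x (rfl | rfl)
      exacts [⟨c₁, hc₁, ha'⟩, ⟨c₂, hc₂, hb'⟩]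
    exact ⟨hab, v, hv, hmem a (by simp), hmem b (by simp)⟩
  · rintro ⟨hab, v, hv, ⟨ca, hca, ha⟩, ⟨cb, hcb, hb⟩⟩
    refine ⟨hab, v, hv, ca, cb, hca, hcb, ?_, a, b, ha, hb, rfl⟩
    rintro rfl
    exact hab (markRel_unique ha hb)

lemma markerSet_isClique {v : V} (hv : T.Interior v) :
    (cordGraph (lassoFull T f)).IsClique (markerSet T f v) :=
  fun _ ha _ hb hab => cordGraph_lassoFull_adj_iff.2 ⟨hab, v, hv, ha, hb⟩

lemma reachable_of_mem_markerSet {v : V} (hv : T.Interior v) {a b : X}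
    (ha : a ∈ markerSet T f v) (hb : b ∈ markerSet T f v) :
    (cordGraph (lassoFull T f)).Reachable a b := by
  by_cases hab : a = b
  · exact hab ▸ .rfl
  · exact (markerSet_isClique hv ha hb hab).reachable

lemma markerSet_eq_lassoAt (hph : T.IsPhylo) {v : V} (hv : T.Interior v) :
    markerSet T f v = {x | ∃ c ∈ lassoAt T f v, x ∈ c} := by
  ext x
  constructor
  · rintro ⟨c₁, hc₁, hx⟩
    obtain ⟨c₂, hc₂, hne⟩ := exists_other_child hph hv c₁
    obtain ⟨b, hb⟩ := exists_markRel T f c₂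
    exact ⟨{x, b}, ⟨c₁, c₂, hc₁, hc₂, hne.symm, x, b, hx, hb, rfl⟩, by simp⟩
  · rintro ⟨-, ⟨c₁, c₂, hc₁, hc₂, -, a, b, ha, hb, rfl⟩, rfl | rfl⟩
    exacts [⟨c₁, hc₁, ha⟩, ⟨c₂, hc₂, hb⟩]

variable [LinearOrder X]

lemma markerSet_nontrivial (hph : T.IsPhylo) (hf : IsClusterMarker T f) {v : V}
    (hv : T.Interior v) : (markerSet T f v).Nontrivial := by
  obtain ⟨c₁, hc₁⟩ := T.exists_child_of_interior hv
  obtain ⟨c₂, hc₂, hne⟩ := exists_other_child hph hv c₁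
  obtain ⟨a, ha⟩ := exists_markRel T f c₁
  obtain ⟨b, hb⟩ := exists_markRel T f c₂
  exact ⟨a, ⟨c₁, hc₁, ha⟩, b, ⟨c₂, hc₂, hb⟩,
    hf.markRel_ne hc₁ hc₂ hne.symm ha hb⟩

lemma reachable_of_mem_leafSet [Finite V] (hf : IsClusterMarker T f) (v : V) {x y : X}
    (hx : x ∈ T.leafSet v) (hy : y ∈ T.leafSet v) :
    (cordGraph (lassoFull T f)).Reachable x y := by
  induction v using T.children_induction generalizing x y with
  | h v ih =>
    by_cases hv : T.IsLeaf v
    · obtain ⟨z, rfl⟩ := hv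
      rw [T.leafSet_leaf] at hx hy
      exact hx.trans hy.symm ▸ .rfl
    have toMarker : ∀ z ∈ T.leafSet v, ∃ m ∈ markerSet T f v,
        (cordGraph (lassoFull T f)).Reachable z m := by
      intro z hz
      obtain ⟨c, hc, hcz⟩ := T.exists_child_desc hz fun h => hv ⟨z, h⟩
      obtain ⟨m, hm⟩ := exists_markRel T f c
      exact ⟨m, ⟨c, hc, hm⟩,
        ih c hc hcz (hf.mem_leafSet_of_markRel (T.child_ne_root hc) hm)⟩
    obtain ⟨mx, hmx, hxm⟩ := toMarker x hx
    obtain ⟨my, hmy, hym⟩ := toMarker y hy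
    exact hxm.trans ((reachable_of_mem_markerSet hv hmx hmy).trans hym.symm)

lemma cordGraph_lassoFull_connected [Finite V] (hf : IsClusterMarker T f) :
    (cordGraph (lassoFull T f)).Connected := by
  have : Nonempty X := (T.leafSet_nonempty T.root).to_subtype.map Subtype.val
  exact ⟨fun x y => reachable_of_mem_leafSet hf T.root (T.desc_root _) (T.desc_root _)⟩

lemma cordGraph_lassoFull_clawFree [Finite V] (hph : T.IsPhylo) (hf : IsClusterMarker T f) :
    ClawFree (cordGraph (lassoFull T f)) := by
  rintro ⟨x, a, b, c, hab, hac, hbc, hxa, hxb, hxc, hnab, hnac, hnbc⟩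
  obtain ⟨-, u, hu, hxu, hau⟩ := cordGraph_lassoFull_adj_iff.1 hxa
  obtain ⟨-, v, hv, hxv, hbv⟩ := cordGraph_lassoFull_adj_iff.1 hxb
  obtain ⟨-, w, hw, hxw, hcw⟩ := cordGraph_lassoFull_adj_iff.1 hxc
  have huv : u ≠ v := by rintro rfl; exact hnab (markerSet_isClique hu hau hbv hab)
  have huw : u ≠ w := by rintro rfl; exact hnac (markerSet_isClique hu hau hcw hac)
  obtain rfl := eq_of_mem_markerSet₃ hph hf huv huw hxu hxv hxw
  exact hnbc (markerSet_isClique hv hbv hcw hbc)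

lemma markerSet_goodSet (hph : T.IsPhylo) (hf : IsClusterMarker T f) {v : V}
    (hv : T.Interior v) : GoodSet (cordGraph (lassoFull T f)) (markerSet T f v) :=
  (markerSet_isClique hv).goodSet (markerSet_nontrivial hph hf hv).nonempty

end CordGraph

section CliqueGraph

open XTree SimpleGraph

variable {X V : Type} {T : XTree X V} {f : Set X → X}

def cliqueGraph (T : XTree X V) (f : Set X → X) : SimpleGraph {v : V // T.Interior v} where
  Adj v w := v ≠ w ∧ (markerSet T f v ∩ markerSet T f w).Nonempty
  symm := ⟨fun _ _ h => ⟨h.1.symm, Set.inter_comm (markerSet T f _) _ ▸ h.2⟩⟩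
  loopless := ⟨fun _ h => h.1 rfl⟩

lemma cliqueGraph_adj {v w : {v : V // T.Interior v}} :
    (cliqueGraph T f).Adj v w ↔ v ≠ w ∧ (markerSet T f v ∩ markerSet T f w).Nonempty :=
  Iff.rfl

lemma reachable_of_cordGraph_walk {H : SimpleGraph {v : V // T.Interior v}} {x y : X}
    (p : (cordGraph (lassoFull T f)).Walk x y)
    (hH : ∀ z ∈ p.support, ∀ v w : {v : V // T.Interior v},
      z ∈ markerSet T f v → z ∈ markerSet T f w → H.Reachable v w)
    {v w : {v : V // T.Interior v}} (hv : x ∈ markerSet T f v) (hw : y ∈ markerSet T f w) :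
    H.Reachable v w := by
  induction p generalizing v with
  | nil => exact hH _ (by simp) v w hv hw
  | cons h p ih =>
    obtain ⟨-, u, hu, hxu, hyu⟩ := cordGraph_lassoFull_adj_iff.1 h
    exact (hH _ (by simp) v ⟨u, hu⟩ hv hxu).trans
      (ih (fun z hz => hH z (by simp [hz])) hyu hw)

lemma cliqueGraph_reachable {v w : {v : V // T.Interior v}} {z : X}
    (hv : z ∈ markerSet T f v) (hw : z ∈ markerSet T f w) :
    (cliqueGraph T f).Reachable v w := by
  by_cases hvw : v = w
  · exact hvw ▸ .rfl
  · exact Adj.reachable (cliqueGraph_adj.2 ⟨hvw, z, hv, hw⟩)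

lemma card_interior_eq [Finite V] (hph : T.IsPhylo) :
    Nat.card {c : V // T.Interior c ∧ c ≠ T.root} + 1 = Nat.card {v : V // T.Interior v} := by
  have h : {v | T.Interior v} = insert T.root {c | T.Interior c ∧ c ≠ T.root} := by
    ext v
    by_cases hv : v = T.root <;> simp [hv, root_interior hph]
  change Nat.card {c | T.Interior c ∧ c ≠ T.root} + 1 = Nat.card {v | T.Interior v}
  rw [Nat.card_coe_set_eq, Nat.card_coe_set_eq, h, Set.ncard_insert_of_notMem (by simp)]

variable [LinearOrder X]

/-- The edge of `cliqueGraph T f` contributed by the marker of the cluster of `c`. -/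
def cliqueGraphEdge (hph : T.IsPhylo) (hf : IsClusterMarker T f)
    (c : {c : V // T.Interior c ∧ c ≠ T.root}) : (cliqueGraph T f).edgeSet :=
  ⟨s(⟨T.parent (T.leaf (f (T.leafSet c))), T.interior_parent (leaf_ne_root hph _)⟩,
      ⟨T.parent c, T.interior_parent c.2.2⟩),
    cliqueGraph_adj.2 ⟨fun h => T.ne_of_desc_child (T.mem_children_parent c.2.2)
        (T.desc_parent_leaf c.2.1 (hf.mem_leafSet c.2.2 c.2.1)) (congrArg Subtype.val h),
      f (T.leafSet c), (mem_markerSet_iff hph).2 (Or.inl rfl),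
      (mem_markerSet_iff hph).2 (Or.inr ⟨c, c.2.2, c.2.1, rfl, rfl⟩)⟩⟩

lemma marker_mem_of_mem_cliqueGraphEdge (hph : T.IsPhylo) (hf : IsClusterMarker T f)
    (c : {c : V // T.Interior c ∧ c ≠ T.root}) :
    ∀ u ∈ (cliqueGraphEdge hph hf c : Sym2 {v : V // T.Interior v}),
      f (T.leafSet c) ∈ markerSet T f u.1 := by
  intro u hu
  rcases Sym2.mem_iff.1 hu with rfl | rfl
  · exact (mem_markerSet_iff hph).2 (Or.inl rfl)
  · exact (mem_markerSet_iff hph).2 (Or.inr ⟨c, c.2.2, c.2.1, rfl, rfl⟩)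

variable [Finite V]

lemma cliqueGraph_connected (hph : T.IsPhylo) (hf : IsClusterMarker T f) :
    (cliqueGraph T f).Connected := by
  have : Nonempty {v : V // T.Interior v} := ⟨⟨T.root, root_interior hph⟩⟩
  refine ⟨fun v w => ?_⟩
  obtain ⟨a, ha⟩ := (markerSet_nontrivial hph hf v.2).nonempty
  obtain ⟨b, hb⟩ := (markerSet_nontrivial hph hf w.2).nonempty
  obtain ⟨p⟩ := (cordGraph_lassoFull_connected hf).preconnected a b
  exact reachable_of_cordGraph_walk p (fun z _ _ _ => cliqueGraph_reachable) ha hb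

lemma cliqueGraphEdge_bijective (hph : T.IsPhylo) (hf : IsClusterMarker T f) :
    Function.Bijective (cliqueGraphEdge hph hf) := by
  constructor
  · intro c d hcd
    have hc := marker_mem_of_mem_cliqueGraphEdge hph hf c
    have hd := hcd ▸ marker_mem_of_mem_cliqueGraphEdge hph hf d
    have hne := (cliqueGraph_adj.1 (cliqueGraphEdge hph hf c).2).1
    refine Subtype.ext (hf.eq_of_marker_eq hph c.2.2 c.2.1 d.2.2 d.2.1 ?_)
    exact eq_of_mem_markerSet_inter hph hf (fun h => hne (Subtype.ext h))
      (hc _ (Sym2.mem_mk_left _ _)) (hc _ (Sym2.mem_mk_right _ _))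
      (hd _ (Sym2.mem_mk_left _ _)) (hd _ (Sym2.mem_mk_right _ _))
  · rintro ⟨e, he⟩
    induction e using Sym2.ind with
    | _ v w =>
      obtain ⟨hvw, z, hzv, hzw⟩ := cliqueGraph_adj.1 he
      obtain ⟨c, hc, hic, rfl, hvw'⟩ :=
        exists_eq_of_mem_markerSet hph hf (fun h => hvw (Subtype.ext h)) hzv hzw
      refine ⟨⟨c, hic, hc⟩, Subtype.ext (Sym2.map.injective Subtype.val_injective ?_)⟩
      simpa [cliqueGraphEdge] using hvw'.symm

lemma cliqueGraph_isTree (hph : T.IsPhylo) (hf : IsClusterMarker T f) :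
    (cliqueGraph T f).IsTree := by
  rw [isTree_iff_connected_and_card, ← card_interior_eq hph,
    ← Nat.card_eq_of_bijective _ (cliqueGraphEdge_bijective hph hf)]
  exact ⟨cliqueGraph_connected hph hf, rfl⟩

/-- A shared marker of two cliques is a cut vertex between them: `s(p, q)` is a bridge of the
tree `cliqueGraph T f`, and a walk avoiding `z` would project to a path around it. -/
lemma mem_support_of_mem_markerSet_inter (hph : T.IsPhylo) (hf : IsClusterMarker T f)
    {p q : V} (hp : T.Interior p) (hq : T.Interior q) (hpq : p ≠ q) {z : X}
    (hzp : z ∈ markerSet T f p) (hzq : z ∈ markerSet T f q) {x y : X}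
    (W : (cordGraph (lassoFull T f)).Walk x y) (hx : x ∈ markerSet T f p)
    (hy : y ∈ markerSet T f q) : z ∈ W.support := by
  set P : {v : V // T.Interior v} := ⟨p, hp⟩
  set Q : {v : V // T.Interior v} := ⟨q, hq⟩
  have hbridge : ¬ ((cliqueGraph T f).deleteEdges {s(P, Q)}).Reachable P Q :=
    isBridge_iff.1 (isAcyclic_iff_forall_adj_isBridge.1 (cliqueGraph_isTree hph hf).isAcyclic
      (cliqueGraph_adj.2 ⟨fun h => hpq (congrArg Subtype.val h), z, hzp, hzq⟩))
  by_contra hzW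
  refine hbridge (reachable_of_cordGraph_walk W (fun u huW v w hv hw => ?_) hx hy)
  by_cases hvw : v = w
  · exact hvw ▸ .rfl
  refine (deleteEdges_adj.2 ⟨cliqueGraph_adj.2 ⟨hvw, u, hv, hw⟩, fun he => ?_⟩).reachable
  have hu : u = z := by
    rcases Sym2.eq_iff.1 (Set.mem_singleton_iff.1 he) with ⟨rfl, rfl⟩ | ⟨rfl, rfl⟩
    · exact eq_of_mem_markerSet_inter hph hf hpq hv hw hzp hzq
    · exact eq_of_mem_markerSet_inter hph hf hpq hw hv hzp hzq
  exact hzW (hu ▸ huW)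

end CliqueGraph

lemma SimpleGraph.Reachable.exists_walk_support_subset {α : Type} {G : SimpleGraph α}
    {S : Set α} {x y : S} (h : (G.induce S).Reachable x y) :
    ∃ W : G.Walk x y, ∀ u ∈ W.support, u ∈ S := by
  obtain ⟨W⟩ := h
  refine ⟨W.map (SimpleGraph.Embedding.induce S).toHom, fun u hu => ?_⟩
  obtain ⟨u', -, rfl⟩ := List.mem_map.1 ((SimpleGraph.Walk.support_map _ _) ▸ hu)
  exact u'.2

section Blocks

open XTree

variable {X V : Type} [LinearOrder X] [Finite V] {T : XTree X V} {f : Set X → X}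

/-- Otherwise a walk in `B` leaves `markerSet T f v` through a vertex `z` shared with a second
marker set, and `z` would be a cut vertex of `B`. -/
lemma GoodSet.subset_markerSet (hph : T.IsPhylo) (hf : IsClusterMarker T f) {B : Set X}
    (hB : GoodSet (cordGraph (lassoFull T f)) B) {x y : X} (hx : x ∈ B) (hy : y ∈ B)
    (hxy : x ≠ y) {v : V} (hv : T.Interior v) (hxv : x ∈ markerSet T f v)
    (hyv : y ∈ markerSet T f v) : B ⊆ markerSet T f v := by
  intro u hu
  by_contra huv
  obtain ⟨W⟩ := hB.2.1.preconnected ⟨x, hx⟩ ⟨u, hu⟩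
  obtain ⟨⟨⟨z, b⟩, hzb⟩, -, hz, hb⟩ :=
    W.exists_boundary_dart {b | b.1 ∈ markerSet T f v} hxv huv
  change z.1 ∈ markerSet T f v at hz
  change b.1 ∉ markerSet T f v at hb
  obtain ⟨-, w, hw, hzw, hbw⟩ := cordGraph_lassoFull_adj_iff.1 hzb
  have hvw : v ≠ w := by rintro rfl; exact hb hbw
  obtain ⟨x', hx'B, hx'v, hx'z⟩ : ∃ x' ∈ B, x' ∈ markerSet T f v ∧ x' ≠ z.1 := by
    by_cases hxz : x = z.1
    · exact ⟨y, hy, hyv, fun h => hxy (hxz.trans h.symm)⟩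
    · exact ⟨x, hx, hxv, hxz⟩
  have hbz : b.1 ≠ z.1 := fun h => hb (h ▸ hz)
  obtain ⟨W', hW'⟩ := ((hB.2.2 z z.2 ⟨b, b.2, hbz⟩).preconnected
    ⟨x', hx'B, hx'z⟩ ⟨b, b.2, hbz⟩).exists_walk_support_subset
  exact (hW' _ (mem_support_of_mem_markerSet_inter hph hf hv hw hvw hz hzw W' hx'v hbw)).2 rfl

lemma GoodSet.exists_subset_markerSet (hph : T.IsPhylo) (hf : IsClusterMarker T f)
    {B : Set X} (hB : GoodSet (cordGraph (lassoFull T f)) B) :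
    ∃ v, T.Interior v ∧ B ⊆ markerSet T f v := by
  rcases Set.subsingleton_or_nontrivial B with hBs | hBn
  · obtain ⟨a, ha⟩ := hB.1
    exact ⟨T.parent (T.leaf a), T.interior_parent (leaf_ne_root hph a),
      fun b hb => hBs hb ha ▸ (mem_markerSet_iff hph).2 (Or.inl rfl)⟩
  · have : Nontrivial B := hBn.coe_sort
    obtain ⟨a, ha⟩ := hB.1
    obtain ⟨b, hab⟩ := hB.2.1.preconnected.exists_adj_of_nontrivial ⟨a, ha⟩
    obtain ⟨hne, v, hv, hav, hbv⟩ := cordGraph_lassoFull_adj_iff.1 hab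
    exact ⟨v, hv, hB.subset_markerSet hph hf ha b.2 hne hv hav hbv⟩

lemma IsBlock.eq_markerSet (hph : T.IsPhylo) (hf : IsClusterMarker T f) {B : Set X}
    (hB : IsBlock (cordGraph (lassoFull T f)) B) : ∃ v, T.Interior v ∧ B = markerSet T f v := by
  obtain ⟨v, hv, hBv⟩ := hB.1.exists_subset_markerSet hph hf
  exact ⟨v, hv, hB.2 _ (markerSet_goodSet hph hf hv) hBv⟩

end Blocks

section Lasso

open XTree

variable {X V : Type} [LinearOrder X] {T : XTree X V} {f : Set X → X}

lemma isTopoLasso_lassoFull (hf : IsClusterMarker T f) : T.IsTopoLasso (lassoFull T f) := by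
  intro v c₁ c₂ hc₁ hc₂ hne
  obtain ⟨a, ha⟩ := exists_markRel T f c₁
  obtain ⟨b, hb⟩ := exists_markRel T f c₂
  exact ⟨a, b, hf.mem_leafSet_of_markRel (T.child_ne_root hc₁) ha,
    hf.mem_leafSet_of_markRel (T.child_ne_root hc₂) hb,
    v, T.interior_of_child hc₁, c₁, c₂, hc₁, hc₂, hne, a, b, ha, hb, rfl⟩

/-- A cord of `L_{(T,f)}(u)` joins leaves whose last common ancestor is `u`. -/
lemma markRel_of_mem_lassoFull (hf : IsClusterMarker T f) {v c₁ c₂ : V}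
    (hc₁ : c₁ ∈ T.children v) (hc₂ : c₂ ∈ T.children v) (hne : c₁ ≠ c₂) {a b : X}
    (ha : a ∈ T.leafSet c₁) (hb : b ∈ T.leafSet c₂) (hab : {a, b} ∈ lassoFull T f) :
    markRel T f c₁ a ∧ markRel T f c₂ b := by
  obtain ⟨u, -, d₁, d₂, hd₁, hd₂, hd, a', b', ha', hb', he⟩ := hab
  have key : ∀ {d₁ d₂ : V}, d₁ ∈ T.children u → d₂ ∈ T.children u →
      d₁ ≠ d₂ → markRel T f d₁ a → markRel T f d₂ b →
      markRel T f c₁ a ∧ markRel T f c₂ b := by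
    intro d₁ d₂ hd₁ hd₂ hd ha' hb'
    have ha₁ := hf.mem_leafSet_of_markRel (T.child_ne_root hd₁) ha'
    have hb₂ := hf.mem_leafSet_of_markRel (T.child_ne_root hd₂) hb'
    obtain rfl : u = v := (T.isLCA_of_mem_leafSet_children hd₁ hd₂ hd ha₁ hb₂).unique
      (T.isLCA_of_mem_leafSet_children hc₁ hc₂ hne ha hb)
    rw [← T.children_eq_of_desc hd₁ hc₁ ha₁ ha,
      ← T.children_eq_of_desc hd₂ hc₂ hb₂ hb]
    exact ⟨ha', hb'⟩
  rcases Set.pair_eq_pair_iff.1 he with ⟨rfl, rfl⟩ | ⟨rfl, rfl⟩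
  · exact key hd₁ hd₂ hd ha' hb'
  · exact key hd₂ hd₁ (Ne.symm hd) hb' ha'

lemma isMinTopoLasso_lassoFull (hf : IsClusterMarker T f) :
    T.IsMinTopoLasso (lassoFull T f) := by
  refine ⟨isTopoLasso_lassoFull hf, fun L' hL' htopo => hL'.antisymm ?_⟩
  rintro _ ⟨v, -, c₁, c₂, hc₁, hc₂, hne, a, b, ha, hb, rfl⟩
  obtain ⟨a', b', ha', hb', hmem⟩ := htopo v c₁ c₂ hc₁ hc₂ hne
  obtain ⟨ha'', hb''⟩ := markRel_of_mem_lassoFull hf hc₁ hc₂ hne ha' hb' (hL' hmem)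
  rwa [← markRel_unique ha'' ha, ← markRel_unique hb'' hb]

end Lasso

theorem stmt16_general {X V : Type} [Fintype V] [LinearOrder X] (T : XTree X V)
    (hph : T.IsPhylo)
    (f : Set X → X) (hf : IsClusterMarker T f) :
    (cordGraph (lassoFull T f)).Connected ∧
      IsBlockGraph (cordGraph (lassoFull T f)) ∧
      (∀ B : Set X, IsBlock (cordGraph (lassoFull T f)) B →
        ∃ v : V, T.Interior v ∧ B = {x | ∃ c ∈ lassoAt T f v, x ∈ c}) ∧
      ClawFree (cordGraph (lassoFull T f)) ∧
      T.IsMinTopoLasso (lassoFull T f) := by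
  refine ⟨cordGraph_lassoFull_connected hf, fun B hB => ?_, fun B hB => ?_,
    cordGraph_lassoFull_clawFree hph hf, isMinTopoLasso_lassoFull hf⟩
  · obtain ⟨v, hv, rfl⟩ := hB.eq_markerSet hph hf
    exact markerSet_isClique hv
  · obtain ⟨v, hv, rfl⟩ := hB.eq_markerSet hph hf
    exact ⟨v, hv, markerSet_eq_lassoAt hph hv⟩

/-- for a non-degenerate X-tree `T` and a cluster marker map `f`,
`Γ(L_{(T,f)})` is a connected claw-free block graph whose blocks are exactly of the
form `Γ(L_{(T,f)}(v))` for interior vertices `v`; i.e. `L_{(T,f)}` is a distinguished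
minimal topological lasso for `T`. -/
theorem stmt16 {X V : Type} [Fintype X] [Fintype V] [LinearOrder X] (T : XTree X V)
    (hph : T.IsPhylo) (hX : 3 ≤ Fintype.card X) (hnd : T.NonDegenerate)
    (f : Set X → X) (hf : IsClusterMarker T f) :
    (cordGraph (lassoFull T f)).Connected ∧
      IsBlockGraph (cordGraph (lassoFull T f)) ∧
      (∀ B : Set X, IsBlock (cordGraph (lassoFull T f)) B →
        ∃ v : V, T.Interior v ∧ B = {x | ∃ c ∈ lassoAt T f v, x ∈ c}) ∧
      ClawFree (cordGraph (lassoFull T f)) ∧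
      T.IsMinTopoLasso (lassoFull T f) :=
  stmt16_general T hph f hf
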